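/- The diagonal map Δ : K → K Π K admits a global homotopic section (a simplicial map σ : K Π K → K with Δ∘σ in the contiguity class of the identity of K Π K) if and only if K is strongly collapsible. -/

import Mathlib

attribute [local instance] Classical.decEq

/-- An abstract simplicial complex on vertex set `V`. -/
structure SC (V : Type) where
  faces : Set (Finset V)
  down_closed : ∀ {σ τ : Finset V}, σ ∈ faces → τ ⊆ σ → τ.Nonempty → τ ∈ faces

/-- A vertex map inducing a simplicial map `K → L`. -/
def IsSimplicialMap {V W : Type} (K : SC V) (L : SC W) (f : V → W) : Prop :=
  ∀ σ ∈ K.faces, σ.image f ∈ L.faces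

/-- Two maps are contiguous: for each simplex, the union of images is a simplex. -/
def Contiguous {V W : Type} (K : SC V) (L : SC W) (f g : V → W) : Prop :=
  ∀ σ ∈ K.faces, σ.image f ∪ σ.image g ∈ L.faces

/-- Being in the same contiguity class: connected by a finite chain of contiguous maps. -/
def ContigClass {V W : Type} (K : SC V) (L : SC W) : (V → W) → (V → W) → Prop :=
  Relation.ReflTransGen (Contiguous K L)

/-- The categorical product of two simplicial complexes. -/
def prodSC {V W : Type} (K : SC V) (L : SC W) : SC (V × W) where
  faces := {σ | σ.image Prod.fst ∈ K.faces ∧ σ.image Prod.snd ∈ L.faces}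
  down_closed := fun hσ hτσ hne =>
    ⟨K.down_closed hσ.1 (Finset.image_subset_image hτσ) (hne.image _),
     L.down_closed hσ.2 (Finset.image_subset_image hτσ) (hne.image _)⟩

/-- `Ω` is a Farber subcomplex of `K Π K`: a subcomplex admitting a simplicial map
`s : Ω → K` with `Δ ∘ s` in the contiguity class of the inclusion. -/
def IsFarber {V : Type} (K : SC V) (Ω : SC (V × V)) : Prop :=
  Ω.faces ⊆ (prodSC K K).faces ∧
  ∃ s : V × V → V, IsSimplicialMap Ω K s ∧
    ContigClass Ω (prodSC K K) (fun p => (s p, s p)) id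

/-- `K Π K` is covered by `n + 1` Farber subcomplexes. -/
def TCle {V : Type} (K : SC V) (n : ℕ) : Prop :=
  ∃ Ω : Fin (n + 1) → SC (V × V), (∀ i, IsFarber K (Ω i)) ∧
    ∀ σ ∈ (prodSC K K).faces, ∃ i, σ ∈ (Ω i).faces

/-- Discrete topological complexity. -/
noncomputable def TCdisc {V : Type} (K : SC V) : ℕ∞ :=
  sInf {n : ℕ∞ | ∃ m : ℕ, n = (m : ℕ∞) ∧ TCle K m}

/-- A categorical subcomplex: the inclusion is in the contiguity class of a constant map
at a vertex of `K`. -/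
def IsCategorical {V : Type} (K : SC V) (L : SC V) : Prop :=
  L.faces ⊆ K.faces ∧ ∃ v : V, {v} ∈ K.faces ∧ ContigClass L K id (fun _ => v)

/-- `K` is covered by `n + 1` categorical subcomplexes. -/
def scatLe {V : Type} (K : SC V) (n : ℕ) : Prop :=
  ∃ L : Fin (n + 1) → SC V, (∀ i, IsCategorical K (L i)) ∧
    ∀ σ ∈ K.faces, ∃ i, σ ∈ (L i).faces

/-- Normalized simplicial LS-category. -/
noncomputable def scat {V : Type} (K : SC V) : ℕ∞ :=
  sInf {n : ℕ∞ | ∃ m : ℕ, n = (m : ℕ∞) ∧ scatLe K m}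

/-- The preimage subcomplex of a subcomplex `Ω` under a vertex map `f`,
inside an ambient complex `M`. -/
def preimSC {V W : Type} (M : SC W) (Ω : SC V) (f : W → V) : SC W where
  faces := {τ | τ ∈ M.faces ∧ τ.image f ∈ Ω.faces}
  down_closed := fun hσ hτσ hne =>
    ⟨M.down_closed hσ.1 hτσ hne,
     Ω.down_closed hσ.2 (Finset.image_subset_image hτσ) (hne.image _)⟩

/-- `K` and `L` have the same strong homotopy type. -/
def StrongEquiv {V W : Type} (K : SC V) (L : SC W) : Prop :=
  ∃ (φ : V → W) (ψ : W → V), IsSimplicialMap K L φ ∧ IsSimplicialMap L K ψ ∧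
    ContigClass L L (φ ∘ ψ) id ∧ ContigClass K K (ψ ∘ φ) id

/-- `K` is edge-path connected. -/
def EdgeConn {V : Type} (K : SC V) : Prop :=
  ∀ v w : V, {v} ∈ K.faces → {w} ∈ K.faces →
    Relation.ReflTransGen (fun a b => ({a, b} : Finset V) ∈ K.faces) v w

/-- `K` is strongly collapsible: the identity is in the contiguity class of a constant map. -/
def StronglyCollapsible {V : Type} (K : SC V) : Prop :=
  ∃ v : V, {v} ∈ K.faces ∧ ContigClass K K id (fun _ => v)

/-!
Restricting a section `s` to the slice `x ↦ (x, v)` and projecting the chain `Δ ∘ s ~ id` to the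
two factors gives `s(x, v) ~ x` and `s(x, v) ~ v`, hence `id ~ const v`. Conversely, if
`id ~ const v`, then the first projection is a section: running that chain in the second
coordinate gives `(x, x) ~ (x, v) ~ (x, y)`.
-/

variable {V W X : Type} {K : SC V} {L : SC W} {M : SC X}

theorem isSimplicialMap_id : IsSimplicialMap K K id := fun σ hσ => by
  rwa [Finset.image_id]

theorem isSimplicialMap_const {v : V} (hv : {v} ∈ K.faces) :
    IsSimplicialMap K K (fun _ => v) := fun σ hσ => by
  rcases σ.eq_empty_or_nonempty with rfl | hne
  · exact hσ
  · rwa [Finset.image_const hne]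

theorem isSimplicialMap_fst : IsSimplicialMap (prodSC K L) K Prod.fst := fun _ hσ => hσ.1

theorem isSimplicialMap_snd : IsSimplicialMap (prodSC K L) L Prod.snd := fun _ hσ => hσ.2

theorem IsSimplicialMap.prodMk {f : V → W} {g : V → X} (hf : IsSimplicialMap K L f)
    (hg : IsSimplicialMap K M g) : IsSimplicialMap K (prodSC L M) (fun x => (f x, g x)) :=
  fun σ hσ => ⟨by simpa only [Finset.image_image, Function.comp_def] using hf σ hσ,
    by simpa only [Finset.image_image, Function.comp_def] using hg σ hσ⟩

namespace Contiguous

variable {f g : V → W}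

theorem symm (hc : Contiguous K L f g) : Contiguous K L g f := fun σ hσ => by
  rw [Finset.union_comm]; exact hc σ hσ

theorem comp_right {f g : W → X} {h : V → W} (hc : Contiguous L M f g)
    (hh : IsSimplicialMap K L h) : Contiguous K M (f ∘ h) (g ∘ h) := fun σ hσ => by
  simpa only [Finset.image_image] using hc _ (hh σ hσ)

theorem comp_left {h : W → X} (hc : Contiguous K L f g) (hh : IsSimplicialMap L M h) :
    Contiguous K M (h ∘ f) (h ∘ g) := fun σ hσ => by
  simpa only [Finset.image_union, Finset.image_image] using hh _ (hc σ hσ)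

theorem prodMk_left {h : V → X} (hc : Contiguous K L f g) (hh : IsSimplicialMap K M h) :
    Contiguous K (prodSC M L) (fun x => (h x, f x)) (fun x => (h x, g x)) := fun σ hσ => by
  refine ⟨?_, ?_⟩ <;> simp only [Finset.image_union, Finset.image_image, Function.comp_def]
  · rw [Finset.union_self]; exact hh σ hσ
  · exact hc σ hσ

end Contiguous

namespace ContigClass

variable {f g : V → W}

theorem symm (hc : ContigClass K L f g) : ContigClass K L g f :=
  Relation.ReflTransGen.mono (fun _ _ h => Contiguous.symm h) _ _
    (Relation.ReflTransGen.swap _ _ hc)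

theorem comp_right {f g : W → X} {h : V → W} (hc : ContigClass L M f g)
    (hh : IsSimplicialMap K L h) : ContigClass K M (f ∘ h) (g ∘ h) :=
  Relation.ReflTransGen.lift (· ∘ h) (fun _ _ h' => h'.comp_right hh) _ _ hc

theorem comp_left {h : W → X} (hc : ContigClass K L f g) (hh : IsSimplicialMap L M h) :
    ContigClass K M (h ∘ f) (h ∘ g) :=
  Relation.ReflTransGen.lift (h ∘ ·) (fun _ _ h' => h'.comp_left hh) _ _ hc

theorem prodMk_left {h : V → X} (hc : ContigClass K L f g) (hh : IsSimplicialMap K M h) :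
    ContigClass K (prodSC M L) (fun x => (h x, f x)) (fun x => (h x, g x)) :=
  Relation.ReflTransGen.lift (fun (k : V → W) x => (h x, k x))
    (fun _ _ h' => h'.prodMk_left hh) _ _ hc

end ContigClass

/-- the diagonal admits a global homotopic section iff `K` is
strongly collapsible. -/
theorem diagonal_section_iff_stronglyCollapsible {V : Type} (K : SC V)
    (hne : ∃ v : V, {v} ∈ K.faces) :
    (∃ s : V × V → V, IsSimplicialMap (prodSC K K) K s ∧
        ContigClass (prodSC K K) (prodSC K K) (fun p => (s p, s p)) id) ↔
      StronglyCollapsible K := by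
  have hfst : IsSimplicialMap (prodSC K K) K Prod.fst := isSimplicialMap_fst
  have hsnd : IsSimplicialMap (prodSC K K) K Prod.snd := isSimplicialMap_snd
  constructor
  · rintro ⟨s, -, hs⟩
    obtain ⟨v, hv⟩ := hne
    have hslice := hs.comp_right (isSimplicialMap_id.prodMk (isSimplicialMap_const hv))
    exact ⟨v, hv, (hslice.comp_left hfst).symm.trans (hslice.comp_left hsnd)⟩
  · rintro ⟨v, -, hv⟩
    have hdiag := (hv.comp_right hfst).prodMk_left hfst
    have hid := (hv.comp_right hsnd).prodMk_left hfst
    exact ⟨Prod.fst, hfst, hdiag.trans hid.symm⟩
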